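/- Let p ≥ 4, s ∈ ℝ and t > 0, and let ψ_s(t) = |s + √t|^p + |s − √t|^p. Then ψ_s''(t) ≥ ψ_0''(t) = (p(p−2)/2) t^{(p−4)/2}; equivalently, the function t ↦ ψ_s(t) − 2t^{p/2} is convex on (0, ∞). -/

import Mathlib

/-!
Write `ψ_s(t) = Φ_s(√t)` with `Φ_s(u) = |s + u|^p + |s - u|^p`. Then
`ψ_s''(t) = N_s(u) / (4u³)` at `u = √t`, where `N_s(u) = u Φ_s''(u) - Φ_s'(u)`, so it suffices
to show `N_0 ≤ N_s` on `[0, ∞)`. Both vanish at `0`, and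
`N_s'(u) = u Φ_s'''(u) = p(p-1)(p-2) u (m(s+u) - m(s-u))` with `m(x) = |x|^(p-4) x`. The
increment of the odd increasing function `m` over an interval of length `2u` is smallest for the
interval centred at `0`: by convexity of `x^(p-3)` on `[0, ∞)` when the interval contains `0`,
by its superadditivity otherwise. Applied to `Φ_s - Φ_0` the same bound gives convexity of
`ψ_s - ψ_0 = ψ_s - 2 t^(p/2)`.
-/

open Real Set

section SqrtComposition

variable {Φ Φ' Φ'' : ℝ → ℝ}

lemma hasDerivAt_comp_sqrt {a t : ℝ} (h : HasDerivAt Φ a √t) (ht : 0 < t) :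
    HasDerivAt (fun t => Φ √t) (a / (2 * √t)) t := by
  refine (h.comp t (hasDerivAt_sqrt ht.ne')).congr_deriv ?_
  ring

lemma hasDerivAt_div_comp_sqrt {a t : ℝ} (h : HasDerivAt Φ' a √t) (ht : 0 < t) :
    HasDerivAt (fun t => Φ' √t / (2 * √t)) ((√t * a - Φ' √t) / (4 * √t ^ 3)) t := by
  have hsqrt : 0 < √t := sqrt_pos.2 ht
  refine ((h.comp t (hasDerivAt_sqrt ht.ne')).div ((hasDerivAt_sqrt ht.ne').const_mul 2)
    (by positivity)).congr_deriv ?_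
  simp only [Function.comp_apply]
  field_simp
  ring

lemma hasDerivAt_deriv_comp_sqrt (hΦ : ∀ u > 0, HasDerivAt Φ (Φ' u) u)
    (hΦ' : ∀ u > 0, HasDerivAt Φ' (Φ'' u) u) {t : ℝ} (ht : 0 < t) :
    HasDerivAt (deriv fun t => Φ √t) ((√t * Φ'' √t - Φ' √t) / (4 * √t ^ 3)) t := by
  refine (hasDerivAt_div_comp_sqrt (hΦ' _ (sqrt_pos.2 ht)) ht).congr_of_eventuallyEq ?_
  filter_upwards [Ioi_mem_nhds ht] with r hr
  exact (hasDerivAt_comp_sqrt (hΦ _ (sqrt_pos.2 hr)) hr).deriv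

lemma convexOn_comp_sqrt (hΦ : ∀ u > 0, HasDerivAt Φ (Φ' u) u)
    (hΦ' : ∀ u > 0, HasDerivAt Φ' (Φ'' u) u) (h : ∀ u > 0, Φ' u ≤ u * Φ'' u) :
    ConvexOn ℝ (Ioi 0) fun t => Φ √t := by
  have hd (t : ℝ) (ht : 0 < t) := hasDerivAt_comp_sqrt (hΦ _ (sqrt_pos.2 ht)) ht
  refine convexOn_of_hasDerivWithinAt2_nonneg (convex_Ioi 0)
    (fun t ht => (hd t ht).continuousAt.continuousWithinAt) (f' := fun t => Φ' √t / (2 * √t))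
    (f'' := fun t => (√t * Φ'' √t - Φ' √t) / (4 * √t ^ 3)) ?_ ?_ ?_
  all_goals simp only [interior_Ioi, mem_Ioi]
  · exact fun t ht => (hd t ht).hasDerivWithinAt
  · exact fun t ht => (hasDerivAt_div_comp_sqrt (hΦ' _ (sqrt_pos.2 ht)) ht).hasDerivWithinAt
  · intro t ht
    have hsqrt : 0 < √t := sqrt_pos.2 ht
    exact div_nonneg (sub_nonneg.2 (h _ hsqrt)) (by positivity)

end SqrtComposition

noncomputable def absPowSum (p s u : ℝ) : ℝ := |s + u| ^ p + |s - u| ^ p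

noncomputable def signedPowDiff (r s u : ℝ) : ℝ := |s + u| ^ r * (s + u) - |s - u| ^ r * (s - u)

lemma hasDerivAt_abs_rpow_mul_self {q : ℝ} (hq : 1 < q) (x : ℝ) :
    HasDerivAt (fun x => |x| ^ q * x) ((q + 1) * |x| ^ q) x := by
  have hsq : |x| ^ (q - 2) * x * x = |x| ^ q := by
    rcases eq_or_ne x 0 with rfl | hx
    · simp [zero_rpow (by linarith : q ≠ 0)]
    · rw [mul_assoc, ← abs_mul_abs_self, ← sq, ← rpow_natCast, ← rpow_add (abs_pos.2 hx)]
      norm_num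
  refine ((hasDerivAt_abs_rpow x hq).mul (hasDerivAt_id x)).congr_deriv ?_
  simp only [id, mul_one]
  linear_combination q * hsq

lemma hasDerivAt_absPowSum {p : ℝ} (hp : 1 < p) (s u : ℝ) :
    HasDerivAt (absPowSum p s) (p * signedPowDiff (p - 2) s u) u := by
  refine (((hasDerivAt_abs_rpow _ hp).comp u ((hasDerivAt_id u).const_add s)).add
    ((hasDerivAt_abs_rpow _ hp).comp u ((hasDerivAt_id u).const_sub s))).congr_deriv ?_
  simp only [signedPowDiff, id]
  ring

lemma hasDerivAt_signedPowDiff {q : ℝ} (hq : 1 < q) (s u : ℝ) :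
    HasDerivAt (signedPowDiff q s) ((q + 1) * absPowSum q s u) u := by
  refine (((hasDerivAt_abs_rpow_mul_self hq _).comp u ((hasDerivAt_id u).const_add s)).sub
    ((hasDerivAt_abs_rpow_mul_self hq _).comp u ((hasDerivAt_id u).const_sub s))).congr_deriv ?_
  simp only [absPowSum, id]
  ring

lemma signedPowDiff_neg (r s u : ℝ) : signedPowDiff r (-s) u = signedPowDiff r s u := by
  rw [signedPowDiff, signedPowDiff, show -s + u = -(s - u) by ring,
    show -s - u = -(s + u) by ring, abs_neg, abs_neg]
  ring

lemma abs_rpow_mul_self_of_nonneg {r x : ℝ} (hr : 0 ≤ r) (hx : 0 ≤ x) :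
    |x| ^ r * x = x ^ (r + 1) := by
  rw [abs_of_nonneg hx, rpow_add_one' hx (by linarith)]

lemma absPowSum_zero_left (p : ℝ) {u : ℝ} (hu : 0 ≤ u) : absPowSum p 0 u = 2 * u ^ p := by
  rw [absPowSum, zero_add, zero_sub, abs_neg, abs_of_nonneg hu]
  ring

lemma signedPowDiff_zero_left {r u : ℝ} (hr : 0 ≤ r) (hu : 0 ≤ u) :
    signedPowDiff r 0 u = 2 * u ^ (r + 1) := by
  rw [signedPowDiff, zero_add, zero_sub, abs_neg, mul_neg, abs_rpow_mul_self_of_nonneg hr hu]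
  ring

lemma two_mul_rpow_le_rpow_add_add_rpow_sub {k s u : ℝ} (hk : 1 ≤ k) (hs : 0 ≤ s)
    (hsu : s ≤ u) : 2 * u ^ k ≤ (u + s) ^ k + (u - s) ^ k := by
  have := (convexOn_rpow hk).2 (mem_Ici.2 (by linarith : 0 ≤ u + s))
    (mem_Ici.2 (by linarith : 0 ≤ u - s)) (by norm_num : (0 : ℝ) ≤ 1 / 2)
    (by norm_num : (0 : ℝ) ≤ 1 / 2) (by norm_num)
  simp only [smul_eq_mul] at this
  rw [show 1 / 2 * (u + s) + 1 / 2 * (u - s) = u by ring] at this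
  linarith

lemma rpow_sub_add_two_mul_rpow_le {k s u : ℝ} (hk : 1 ≤ k) (hu : 0 ≤ u) (hus : u ≤ s) :
    (s - u) ^ k + 2 * u ^ k ≤ (s + u) ^ k := by
  have htwo : 2 ≤ (2 : ℝ) ^ k := by
    simpa using rpow_le_rpow_of_exponent_le (by norm_num : (1 : ℝ) ≤ 2) hk
  calc (s - u) ^ k + 2 * u ^ k ≤ (s - u) ^ k + (2 * u) ^ k := by
        rw [mul_rpow zero_le_two hu]
        gcongr
    _ ≤ (s - u + 2 * u) ^ k := add_rpow_le_rpow_add (by linarith) (by linarith) hk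
    _ = (s + u) ^ k := by ring_nf

lemma signedPowDiff_zero_le {r u : ℝ} (hr : 0 ≤ r) (hu : 0 ≤ u) (s : ℝ) :
    signedPowDiff r 0 u ≤ signedPowDiff r s u := by
  wlog hs : 0 ≤ s generalizing s
  · simpa [signedPowDiff_neg] using this (-s) (by linarith)
  have hk : 1 ≤ r + 1 := by linarith
  rw [signedPowDiff_zero_left hr hu, signedPowDiff,
    abs_rpow_mul_self_of_nonneg hr (by linarith : 0 ≤ s + u)]
  rcases le_total s u with hsu | hus
  · rw [abs_sub_comm, show s - u = -(u - s) by ring, mul_neg,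
      abs_rpow_mul_self_of_nonneg hr (by linarith : 0 ≤ u - s), add_comm s]
    linarith [two_mul_rpow_le_rpow_add_add_rpow_sub hk hs hsu]
  · rw [abs_rpow_mul_self_of_nonneg hr (by linarith : 0 ≤ s - u)]
    linarith [rpow_sub_add_two_mul_rpow_le hk hu hus]

noncomputable def curvatureNumerator (p s u : ℝ) : ℝ :=
  u * (p * (p - 1) * absPowSum (p - 2) s u) - p * signedPowDiff (p - 2) s u

lemma hasDerivAt_curvatureNumerator {p : ℝ} (hp : 3 < p) (s u : ℝ) :
    HasDerivAt (curvatureNumerator p s)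
      (p * (p - 1) * (p - 2) * u * signedPowDiff (p - 4) s u) u := by
  have hsum := hasDerivAt_absPowSum (p := p - 2) (by linarith) s u
  have hdiff := hasDerivAt_signedPowDiff (q := p - 2) (by linarith) s u
  refine (((hasDerivAt_id u).mul (hsum.const_mul (p * (p - 1)))).sub
    (hdiff.const_mul p)).congr_deriv ?_
  rw [show p - 2 - 2 = p - 4 by ring, id]
  ring

lemma curvatureNumerator_zero_le {p u : ℝ} (hp : 4 ≤ p) (s : ℝ) (hu : 0 ≤ u) :
    curvatureNumerator p 0 u ≤ curvatureNumerator p s u := by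
  have hd (v : ℝ) := (hasDerivAt_curvatureNumerator (p := p) (by linarith) s v).sub
    (hasDerivAt_curvatureNumerator (p := p) (by linarith) 0 v)
  have hmono : MonotoneOn (curvatureNumerator p s - curvatureNumerator p 0) (Ici 0) := by
    refine monotoneOn_of_deriv_nonneg (convex_Ici 0)
      (fun v _ => (hd v).continuousAt.continuousWithinAt)
      (fun v _ => (hd v).differentiableAt.differentiableWithinAt) fun v hv => ?_
    rw [interior_Ici] at hv
    rw [(hd v).deriv, ← mul_sub]
    have hp' : 0 ≤ p * (p - 1) * (p - 2) :=
      mul_nonneg (mul_nonneg (by linarith) (by linarith)) (by linarith)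
    exact mul_nonneg (mul_nonneg hp' (le_of_lt hv))
      (sub_nonneg.2 (signedPowDiff_zero_le (by linarith) (le_of_lt hv) s))
  have hstart : curvatureNumerator p s 0 - curvatureNumerator p 0 0 = 0 := by
    simp [curvatureNumerator, signedPowDiff]
  have hgrow := hmono self_mem_Ici hu hu
  simp only [Pi.sub_apply] at hgrow
  linarith

lemma curvatureNumerator_zero_left {p u : ℝ} (hp : 2 ≤ p) (hu : 0 < u) :
    curvatureNumerator p 0 u = 2 * p * (p - 2) * u ^ (p - 4) * u ^ 3 := by
  have hpow : u ^ (p - 2 + 1) = u ^ (p - 4) * u ^ 3 := by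
    rw [show p - 2 + 1 = p - 4 + (3 : ℕ) by push_cast; ring, rpow_add_natCast hu.ne']
  have hstep : u ^ (p - 2 + 1) = u ^ (p - 2) * u := rpow_add_one' hu.le (by linarith)
  rw [curvatureNumerator, absPowSum_zero_left _ hu.le,
    signedPowDiff_zero_left (by linarith) hu.le]
  linear_combination (2 * p * (p - 2)) * hpow - (2 * p * (p - 1)) * hstep

lemma hasDerivAt_deriv_psi {p t : ℝ} (hp : 3 < p) (s : ℝ) (ht : 0 < t) :
    HasDerivAt (deriv fun u => |s + √u| ^ p + |s - √u| ^ p)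
      (curvatureNumerator p s √t / (4 * √t ^ 3)) t :=
  hasDerivAt_deriv_comp_sqrt (Φ := absPowSum p s)
    (Φ'' := fun u => p * (p - 1) * absPowSum (p - 2) s u)
    (fun u _ => hasDerivAt_absPowSum (by linarith) s u)
    (fun u _ => ((hasDerivAt_signedPowDiff (by linarith) s u).const_mul p).congr_deriv (by ring))
    ht

lemma deriv_deriv_psi_zero {p t : ℝ} (hp : 4 ≤ p) (ht : 0 < t) :
    deriv (deriv fun u => |(0 : ℝ) + √u| ^ p + |(0 : ℝ) - √u| ^ p) t =
      p * (p - 2) / 2 * t ^ ((p - 4) / 2) := by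
  have hsqrt : 0 < √t := sqrt_pos.2 ht
  rw [(hasDerivAt_deriv_psi (by linarith) 0 ht).deriv,
    curvatureNumerator_zero_left (by linarith) hsqrt, rpow_div_two_eq_sqrt _ ht.le]
  field_simp
  ring

lemma convexOn_psi_sub_two_mul_rpow {p : ℝ} (hp : 4 ≤ p) (s : ℝ) :
    ConvexOn ℝ (Ioi 0) fun u => |s + √u| ^ p + |s - √u| ^ p - 2 * u ^ (p / 2) := by
  have hconv := convexOn_comp_sqrt (Φ := fun u => absPowSum p s u - absPowSum p 0 u)
    (Φ' := fun u => p * (signedPowDiff (p - 2) s u - signedPowDiff (p - 2) 0 u))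
    (Φ'' := fun u => p * (p - 1) * (absPowSum (p - 2) s u - absPowSum (p - 2) 0 u))
    (fun u _ => ((hasDerivAt_absPowSum (by linarith) s u).sub
      (hasDerivAt_absPowSum (by linarith) 0 u)).congr_deriv (by ring))
    (fun u _ => (((hasDerivAt_signedPowDiff (by linarith) s u).sub
      (hasDerivAt_signedPowDiff (by linarith) 0 u)).const_mul p).congr_deriv (by ring))
    (fun u hu => by
      have := curvatureNumerator_zero_le hp s hu.le
      simp only [curvatureNumerator] at this
      linarith)
  refine hconv.congr fun t ht => ?_
  simp only [absPowSum_zero_left p (sqrt_nonneg t), ← rpow_div_two_eq_sqrt _ (le_of_lt ht)]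
  rfl

/-- **Lower bound on `ψ_s''` for `p ≥ 4`** (Corollary 2.2):
`ψ_s''(t) ≥ ψ_0''(t) = p(p−2)/2 · t^{(p−4)/2}`; equivalently,
`t ↦ ψ_s(t) − 2 t^{p/2}` is convex on `(0, ∞)`. -/
theorem psi_second_deriv_ge_of_four_le (p : ℝ) (hp : 4 ≤ p) (s t : ℝ) (ht : 0 < t) :
    deriv (deriv (fun u : ℝ => |s + Real.sqrt u| ^ p + |s - Real.sqrt u| ^ p)) t ≥
        p * (p - 2) / 2 * t ^ ((p - 4) / 2) ∧
      deriv (deriv (fun u : ℝ => |(0 : ℝ) + Real.sqrt u| ^ p + |(0 : ℝ) - Real.sqrt u| ^ p)) t =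
        p * (p - 2) / 2 * t ^ ((p - 4) / 2) ∧
      ConvexOn ℝ (Set.Ioi (0 : ℝ))
        (fun u : ℝ => |s + Real.sqrt u| ^ p + |s - Real.sqrt u| ^ p - 2 * u ^ (p / 2)) := by
  have hψ (s : ℝ) := (hasDerivAt_deriv_psi (p := p) (by linarith) s ht).deriv
  refine ⟨?_, deriv_deriv_psi_zero hp ht, convexOn_psi_sub_two_mul_rpow hp s⟩
  rw [← deriv_deriv_psi_zero hp ht, hψ s, hψ 0, ge_iff_le]
  gcongr
  exact curvatureNumerator_zero_le hp s (sqrt_nonneg t)
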